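/- Let S be an inverse semigroup, τ a congruence on E(S), and C(τ) = { a ∈ N(τ) : ∃ e ∈ E(S), e τ a⁻¹a and ae = e }. Then C(τ) is self conjugate in N(τ): for all a ∈ C(τ) and b ∈ N(τ), bab⁻¹ ∈ C(τ). -/

import Mathlib

class InverseSemigroup (S : Type*) extends Semigroup S where
  inv : S → S
  mul_inv_mul : ∀ a : S, a * inv a * a = a
  inv_mul_inv : ∀ a : S, inv a * a * inv a = inv a
  inv_unique : ∀ a b : S, a * b * a = a → b * a * b = b → b = inv a

open InverseSemigroup

/-- `e` is an idempotent. -/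
def IsIdem {S : Type*} [Mul S] (e : S) : Prop := e * e = e

/-- `r` is a left congruence: an equivalence relation compatible with left multiplication. -/
def IsLeftCongruence {S : Type*} [Semigroup S] (r : S → S → Prop) : Prop :=
  Equivalence r ∧ ∀ a b c : S, r a b → r (c * a) (c * b)

/-- The inverse kernel of a relation: elements related to `a * a⁻¹`. -/
def InK {S : Type*} [InverseSemigroup S] (r : S → S → Prop) : Set S :=
  {a | r a (a * inv a)}

/-- The kernel: elements related to some idempotent. -/
def lker {S : Type*} [InverseSemigroup S] (r : S → S → Prop) : Set S :=
  {a | ∃ e, IsIdem e ∧ r a e}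

/-- `τ` is a congruence on the semilattice of idempotents `E(S)`. -/
def IsECong {S : Type*} [InverseSemigroup S] (τ : S → S → Prop) : Prop :=
  (∀ e f, τ e f → IsIdem e ∧ IsIdem f) ∧
  (∀ e, IsIdem e → τ e e) ∧
  (∀ e f, τ e f → τ f e) ∧
  (∀ e f g, τ e f → τ f g → τ e g) ∧
  (∀ e f g, IsIdem g → τ e f → τ (g * e) (g * f))

/-- The normaliser of a congruence on the idempotents. -/
def normaliser {S : Type*} [InverseSemigroup S] (τ : S → S → Prop) : Set S :=
  {a | ∀ e f, τ e f → τ (a * e * inv a) (a * f * inv a) ∧ τ (inv a * e * a) (inv a * f * a)}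

/-- `T` is a full inverse subsemigroup of `S`. -/
def IsFullInverseSub {S : Type*} [InverseSemigroup S] (T : Set S) : Prop :=
  (∀ e : S, IsIdem e → e ∈ T) ∧ (∀ a b, a ∈ T → b ∈ T → a * b ∈ T) ∧
  (∀ a, a ∈ T → inv a ∈ T)

/-- The centraliser of a congruence on the idempotents. -/
def centraliser {S : Type*} [InverseSemigroup S] (τ : S → S → Prop) : Set S :=
  {a | a ∈ normaliser τ ∧ ∃ e, IsIdem e ∧ τ e (InverseSemigroup.inv a * a) ∧ a * e = e}

/-! If `e` witnesses `a ∈ C(τ)` and `c = b a b⁻¹`, then `(b e b⁻¹)(c⁻¹ c)` witnesses `c ∈ C(τ)`: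
conjugating `e τ a⁻¹a` by `b ∈ N(τ)` gives `b e b⁻¹ τ b a⁻¹a b⁻¹`, and multiplying by
`c⁻¹c ≤ b a⁻¹a b⁻¹` turns the right-hand side into `c⁻¹c`; conjugating `a e = e` gives
`c (b e b⁻¹) = b e b⁻¹`. Membership `c ∈ N(τ)` holds because `N(τ)` is an inverse subsemigroup. -/

namespace InverseSemigroup

variable {S : Type*} [InverseSemigroup S]

theorem inv_inv (a : S) : inv (inv a) = a :=
  (inv_unique (inv a) a (inv_mul_inv a) (mul_inv_mul a)).symm

theorem mul_inv_mul_self (a : S) : a * (inv a * a) = a := by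
  rw [← mul_assoc, mul_inv_mul]

theorem isIdem_inv_mul_self (a : S) : IsIdem (inv a * a) := by
  unfold IsIdem
  rw [← mul_assoc, inv_mul_inv]

theorem IsIdem.mul_self_left {e : S} (he : IsIdem e) (x : S) : e * (e * x) = e * x := by
  rw [← mul_assoc, he]

theorem IsIdem.inv_eq {e : S} (he : IsIdem e) : inv e = e :=
  (inv_unique e e (by rw [he, he]) (by rw [he, he])).symm

theorem IsIdem.mul {e f : S} (he : IsIdem e) (hf : IsIdem f) : IsIdem (e * f) := by
  have hxyx : e * f * inv (e * f) * (e * f) = e * f := mul_inv_mul _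
  have hyxy : inv (e * f) * (e * f) * inv (e * f) = inv (e * f) := inv_mul_inv _
  -- `f y e` is another inverse of `e f`, where `y = (e f)⁻¹`; hence `y = f y e` is idempotent.
  have hy : f * inv (e * f) * e = inv (e * f) := by
    refine inv_unique _ _ ?_ ?_
    · simp only [mul_assoc, he.mul_self_left, hf.mul_self_left] at hxyx ⊢
      exact hxyx
    · have hyxye := congrArg (· * e) hyxy
      simp only [mul_assoc, he.mul_self_left, hf.mul_self_left] at hyxye ⊢
      rw [hyxye]
  have hy_idem : IsIdem (inv (e * f)) :=
    calc inv (e * f) * inv (e * f) = f * inv (e * f) * e * (f * inv (e * f) * e) := by rw [hy]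
      _ = f * (inv (e * f) * (e * f) * inv (e * f)) * e := by simp only [mul_assoc]
      _ = inv (e * f) := by rw [hyxy, hy]
  rw [← inv_inv (e * f), hy_idem.inv_eq]
  exact hy_idem

theorem IsIdem.mul_comm {e f : S} (he : IsIdem e) (hf : IsIdem f) : e * f = f * e := by
  have hef : IsIdem (e * f) := he.mul hf
  have hfe : f * e * (f * e) = f * e := hf.mul he
  refine (hef.inv_eq ▸ inv_unique (e * f) (f * e) ?_ ?_).symm
  · have h : e * f * (e * f) = e * f := hef
    simpa only [mul_assoc, he.mul_self_left, hf.mul_self_left] using h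
  · simpa only [mul_assoc, he.mul_self_left, hf.mul_self_left] using hfe

theorem mul_inv_rev (a b : S) : inv (a * b) = inv b * inv a := by
  have hcomm := (isIdem_inv_mul_self (inv b)).mul_comm (isIdem_inv_mul_self a)
  rw [inv_inv] at hcomm
  refine (inv_unique _ _ ?_ ?_).symm
  · calc a * b * (inv b * inv a) * (a * b) = a * ((b * inv b) * (inv a * a)) * b := by
          simp only [mul_assoc]
      _ = (a * inv a * a) * (b * inv b * b) := by rw [hcomm]; simp only [mul_assoc]
      _ = a * b := by rw [mul_inv_mul, mul_inv_mul]
  · calc inv b * inv a * (a * b) * (inv b * inv a)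
          = inv b * ((inv a * a) * (b * inv b)) * inv a := by simp only [mul_assoc]
      _ = (inv b * b * inv b) * (inv a * a * inv a) := by rw [← hcomm]; simp only [mul_assoc]
      _ = inv b * inv a := by rw [inv_mul_inv, inv_mul_inv]

theorem IsIdem.conj_mul_conj {e : S} (he : IsIdem e) (b x : S) :
    b * x * inv b * (b * e * inv b) = b * (x * e) * inv b :=
  calc b * x * inv b * (b * e * inv b) = b * x * (inv b * b * e) * inv b := by
        simp only [mul_assoc]
    _ = b * (x * e) * (inv b * b * inv b) := by
        rw [(isIdem_inv_mul_self b).mul_comm he]; simp only [mul_assoc]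
    _ = b * (x * e) * inv b := by rw [inv_mul_inv]

theorem IsIdem.conj {e : S} (he : IsIdem e) (b : S) : IsIdem (b * e * inv b) := by
  unfold IsIdem
  rw [he.conj_mul_conj, he]

theorem inv_mul_self_conj_mul_conj_inv_mul_self (a b : S) :
    inv (b * a * inv b) * (b * a * inv b) * (b * (inv a * a) * inv b)
      = inv (b * a * inv b) * (b * a * inv b) := by
  -- `b a⁻¹a b⁻¹ = x⁻¹x` and `b a b⁻¹ = b x` for `x = a b⁻¹`, and always `(b x)⁻¹(b x) ≤ x⁻¹x`.
  have h : b * (inv a * a) * inv b = inv (a * inv b) * (a * inv b) := by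
    rw [mul_inv_rev, inv_inv]
    simp only [mul_assoc]
  rw [h, mul_assoc b a]
  simp only [mul_assoc, mul_inv_mul_self]

theorem IsECong.mul_left {τ : S → S → Prop} (hτ : IsECong τ) {e f g : S} (hg : IsIdem g)
    (h : τ e f) : τ (g * e) (g * f) :=
  hτ.2.2.2.2 e f g hg h

theorem mul_mem_normaliser {τ : S → S → Prop} {a b : S} (ha : a ∈ normaliser τ)
    (hb : b ∈ normaliser τ) : a * b ∈ normaliser τ := by
  intro e f h
  rw [mul_inv_rev]
  constructor
  · simpa only [mul_assoc] using (ha _ _ (hb e f h).1).1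
  · simpa only [mul_assoc] using (hb _ _ (ha e f h).2).2

theorem inv_mem_normaliser {τ : S → S → Prop} {a : S} (ha : a ∈ normaliser τ) :
    inv a ∈ normaliser τ := by
  intro e f h
  rw [inv_inv]
  exact (ha e f h).symm

theorem conj_mem_normaliser {τ : S → S → Prop} {a b : S} (ha : a ∈ normaliser τ)
    (hb : b ∈ normaliser τ) : b * a * inv b ∈ normaliser τ :=
  mul_mem_normaliser (mul_mem_normaliser hb ha) (inv_mem_normaliser hb)

end InverseSemigroup

theorem stmt10 {S : Type*} [InverseSemigroup S] (τ : S → S → Prop)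
    (hτ : IsECong τ) :
    ∀ a b : S, a ∈ centraliser τ → b ∈ normaliser τ →
      b * a * inv b ∈ centraliser τ := by
  rintro a b ⟨haN, e, he, he_rel, hae⟩ hb
  have hc : IsIdem (inv (b * a * inv b) * (b * a * inv b)) := isIdem_inv_mul_self _
  refine ⟨conj_mem_normaliser haN hb, b * e * inv b * (inv (b * a * inv b) * (b * a * inv b)),
    (he.conj b).mul hc, ?_, ?_⟩
  · have h := hτ.mul_left hc (hb e _ he_rel).1
    rwa [inv_mul_self_conj_mul_conj_inv_mul_self, hc.mul_comm (he.conj b)] at h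
  · rw [← mul_assoc, he.conj_mul_conj, hae]
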